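/- Let X be a compact Hausdorff space and f : ℕ → X a map with finite range. Then the limit lim_{m → ∞} (log |R_m(f)|)/m exists and equals AE(f), where R_m(f) = {(f(lm), f(lm+1), …, f(lm+m−1)) : l ∈ ℕ} is the set of m-blocks of f starting at multiples of m and |R_m(f)| is its cardinality. -/

import Mathlib

open Filter Set Topology

namespace Anqie

variable {X : Type*} [TopologicalSpace X]

/-- `𝒰` is an open cover of `X`. -/
def IsOpenCover (𝒰 : Set (Set X)) : Prop :=
  (∀ U ∈ 𝒰, IsOpen U) ∧ ⋃₀ 𝒰 = Set.univ

/-- The common refinement `𝒰 ∨ T⁻¹ 𝒰 ∨ ⋯ ∨ T^{-(n-1)} 𝒰`. -/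
def iterJoin (T : X → X) (𝒰 : Set (Set X)) (n : ℕ) : Set (Set X) :=
  {V | ∃ u : Fin n → Set X, (∀ j, u j ∈ 𝒰) ∧ V = ⋂ j : Fin n, T^[(j : ℕ)] ⁻¹' u j}

/-- The minimal cardinality of a finite subcover of `𝒱` (junk value `0` if none exists). -/
noncomputable def coverNum (𝒱 : Set (Set X)) : ℕ :=
  sInf {k | ∃ F : Finset (Set X), (↑F : Set (Set X)) ⊆ 𝒱 ∧
    ⋃₀ (↑F : Set (Set X)) = Set.univ ∧ F.card = k}

/-- The Adler–Konheim–McAndrew entropy of `T` relative to the open cover `𝒰`. -/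
noncomputable def coverEntropy (T : X → X) (𝒰 : Set (Set X)) : EReal :=
  Filter.atTop.limsup fun n : ℕ =>
    ((Real.log (coverNum (iterJoin T 𝒰 n)) / n : ℝ) : EReal)

/-- The Adler–Konheim–McAndrew topological entropy of `T`, via open covers. -/
noncomputable def entropy (T : X → X) : EReal :=
  ⨆ 𝒰 ∈ {𝒰 : Set (Set X) | IsOpenCover 𝒰}, coverEntropy T 𝒰

/-- The set of forward-orbit sequences of `f : ℕ → X` inside `X^ℕ`. -/
def orbitSet (f : ℕ → X) : Set (ℕ → X) :=
  {ω | ∃ n : ℕ, ∀ k : ℕ, ω k = f (n + k)}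

/-- `X_f`, the closure of the set of orbit sequences in the product topology. -/
def orbitClosure (f : ℕ → X) : Set (ℕ → X) := closure (orbitSet f)

lemma shift_mem_orbitClosure (f : ℕ → X) {ω : ℕ → X} (hω : ω ∈ orbitClosure f) :
    (fun k => ω (k + 1)) ∈ orbitClosure f := by
  have hcont : Continuous fun ω : ℕ → X => fun k => ω (k + 1) :=
    continuous_pi fun k => continuous_apply (k + 1)
  have hmaps : MapsTo (fun ω : ℕ → X => fun k => ω (k + 1)) (orbitSet f) (orbitSet f) := by
    rintro ω ⟨n, hn⟩
    refine ⟨n + 1, fun k => ?_⟩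
    show ω (k + 1) = f (n + 1 + k)
    rw [hn (k + 1)]; congr 1; omega
  exact map_mem_closure hcont hω hmaps

/-- `B_f`, the left shift restricted to `X_f`. -/
def shiftOn (f : ℕ → X) : orbitClosure f → orbitClosure f :=
  fun ω => ⟨fun k => (ω : ℕ → X) (k + 1), shift_mem_orbitClosure f ω.2⟩

/-- The anqie entropy of a map `f : ℕ → X`: the AKM topological entropy of the
left shift on `X_f`. -/
noncomputable def AE (f : ℕ → X) : EReal := entropy (shiftOn f)

end Anqie

/-!
For finite-range `f`, the orbit closure `X_f` is a closed subset of `(range f)^ℕ`, so its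
cylinder sets are open and, by compactness, every open cover of `X_f` is refined by the
cylinders of some fixed depth `N`. Hence the `n`-fold joins are controlled by the number
`complexity f n` of length-`n` blocks of `f`: the cover by first letters needs at least
`complexity f n` sets, and any open cover needs at most `complexity f (n + N)`. So `AE f` is the
growth rate `lim log (complexity f n) / n`, which exists by Fekete's lemma since the complexity
is submultiplicative. The regular blocks are squeezed in between: there are at most
`complexity f m` of them, and a block of length `k * m` is determined by its phase modulo `m`
and `k + 1` consecutive regular blocks.
-/

namespace Anqie

lemma log_natCast_le_log_natCast {a b : ℕ} (h : a ≤ b) : Real.log a ≤ Real.log b := by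
  rcases a.eq_zero_or_pos with rfl | ha
  · simpa using Real.log_natCast_nonneg b
  · exact Real.log_le_log (by exact_mod_cast ha) (by exact_mod_cast h)

section Blocks

variable {X : Type*} {f : ℕ → X}

def blocks (f : ℕ → X) (m : ℕ) : Set (Fin m → X) :=
  {w | ∃ n : ℕ, ∀ j : Fin m, w j = f (n + j)}

def regularBlocks (f : ℕ → X) (m : ℕ) : Set (Fin m → X) :=
  {w | ∃ l : ℕ, ∀ j : Fin m, w j = f (l * m + j)}

noncomputable def complexity (f : ℕ → X) (m : ℕ) : ℕ := Nat.card (blocks f m)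

lemma blocks_finite (hf : (range f).Finite) (m : ℕ) : (blocks f m).Finite :=
  (Set.Finite.pi fun _ : Fin m => hf).subset fun _ ⟨n, hn⟩ j _ => ⟨n + j, (hn j).symm⟩

lemma regularBlocks_subset_blocks (m : ℕ) : regularBlocks f m ⊆ blocks f m :=
  fun _ ⟨l, hl⟩ => ⟨l * m, hl⟩

lemma card_regularBlocks_pos (hf : (range f).Finite) (m : ℕ) :
    0 < Nat.card (regularBlocks f m) :=
  have := ((blocks_finite hf m).subset (regularBlocks_subset_blocks m)).to_subtype
  have : Nonempty (regularBlocks f m) := ⟨fun j => f (0 * m + j), 0, fun _ => rfl⟩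
  Nat.card_pos

lemma card_regularBlocks_le_complexity (hf : (range f).Finite) (m : ℕ) :
    Nat.card (regularBlocks f m) ≤ complexity f m :=
  Nat.card_mono (blocks_finite hf m) (regularBlocks_subset_blocks m)

lemma complexity_pos (hf : (range f).Finite) (m : ℕ) : 0 < complexity f m :=
  (card_regularBlocks_pos hf m).trans_le (card_regularBlocks_le_complexity hf m)

lemma natCard_le_of_subset_range {α β : Type*} [Finite α] {s : Set β} {g : α → β}
    (h : s ⊆ range g) : Nat.card s ≤ Nat.card α :=
  (Nat.card_mono (finite_range g) h).trans (Finite.card_range_le g)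

lemma complexity_add_le (hf : (range f).Finite) (m k : ℕ) :
    complexity f (m + k) ≤ complexity f m * complexity f k := by
  have := (blocks_finite hf m).to_subtype
  have := (blocks_finite hf k).to_subtype
  rw [complexity, complexity, complexity, ← Nat.card_prod]
  refine natCard_le_of_subset_range
    (g := fun p : blocks f m × blocks f k => Fin.append p.1.1 p.2.1) ?_
  rintro w ⟨n, hn⟩
  refine ⟨(⟨_, n, fun _ => rfl⟩, ⟨_, n + m, fun _ => rfl⟩), funext fun j => ?_⟩
  refine Fin.addCases (fun i => ?_) (fun i => ?_) j
  · simp [hn]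
  · simp [hn, add_assoc]

/-- A block of length `k * m` starting at `q * m + s` with `s < m` is read off `s` and the
`k + 1` regular blocks starting at `q * m, …, (q + k) * m`. -/
lemma complexity_mul_le (hf : (range f).Finite) {m : ℕ} (hm : 0 < m) (k : ℕ) :
    complexity f (k * m) ≤ m * Nat.card (regularBlocks f m) ^ (k + 1) := by
  have := ((blocks_finite hf m).subset (regularBlocks_subset_blocks m)).to_subtype
  have hdiv (s : Fin m) (j : Fin (k * m)) : ((s : ℕ) + j) / m < k + 1 := by
    rw [Nat.div_lt_iff_lt_mul hm, add_mul, one_mul]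
    omega
  let g : Fin m × (Fin (k + 1) → regularBlocks f m) → Fin (k * m) → X :=
    fun p j => (p.2 ⟨(p.1 + j) / m, hdiv p.1 j⟩).1 ⟨(p.1 + j) % m, Nat.mod_lt _ hm⟩
  calc complexity f (k * m) ≤ Nat.card (Fin m × (Fin (k + 1) → regularBlocks f m)) := by
        refine natCard_le_of_subset_range (g := g) ?_
        rintro w ⟨n, hn⟩
        refine ⟨(⟨n % m, Nat.mod_lt _ hm⟩, fun i => ⟨_, n / m + i, fun _ => rfl⟩),
          funext fun j => ?_⟩
        simp only [g, hn]
        congr 1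
        have := Nat.div_add_mod n m
        have := Nat.div_add_mod (n % m + j) m
        nlinarith
    _ = m * Nat.card (regularBlocks f m) ^ (k + 1) := by
        simp [Nat.card_prod, Nat.card_fun]

lemma subadditive_log_complexity (hf : (range f).Finite) :
    Subadditive fun n => Real.log (complexity f n) := fun m k => by
  have hpos := complexity_pos hf
  calc Real.log (complexity f (m + k))
      ≤ Real.log ((complexity f m * complexity f k : ℕ) : ℝ) :=
        log_natCast_le_log_natCast (complexity_add_le hf m k)
    _ = Real.log (complexity f m) + Real.log (complexity f k) := by
        push_cast
        exact Real.log_mul (by exact_mod_cast (hpos m).ne') (by exact_mod_cast (hpos k).ne')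

lemma bddBelow_log_complexity_div :
    BddBelow (range fun n => Real.log (complexity f n) / n) :=
  ⟨0, by rintro _ ⟨n, rfl⟩; positivity⟩

lemma tendsto_log_complexity_div (hf : (range f).Finite) :
    Tendsto (fun n => Real.log (complexity f n) / n) atTop
      (𝓝 (subadditive_log_complexity hf).lim) :=
  (subadditive_log_complexity hf).tendsto_lim bddBelow_log_complexity_div

lemma lim_le_log_card_regularBlocks_div (hf : (range f).Finite) {m : ℕ} (hm : 0 < m) :
    (subadditive_log_complexity hf).lim ≤ Real.log (Nat.card (regularBlocks f m)) / m := by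
  set ρ := Real.log (Nat.card (regularBlocks f m))
  have hbound (k : ℕ) (hk : 1 ≤ k) :
      (subadditive_log_complexity hf).lim ≤
        Real.log m / m * (k : ℝ)⁻¹ + (1 + (k : ℝ)⁻¹) * (ρ / m) := by
    have hkR : (0 : ℝ) < k := by exact_mod_cast hk
    have hlog : Real.log (complexity f (k * m)) ≤ Real.log m + (k + 1) * ρ := by
      calc Real.log (complexity f (k * m))
          ≤ Real.log ((m * Nat.card (regularBlocks f m) ^ (k + 1) : ℕ) : ℝ) :=
            log_natCast_le_log_natCast (complexity_mul_le hf hm k)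
        _ = Real.log m + (k + 1) * ρ := by
            have := card_regularBlocks_pos hf m
            push_cast
            rw [Real.log_mul (by positivity) (by positivity), Real.log_pow]
            push_cast
            ring
    calc (subadditive_log_complexity hf).lim ≤ Real.log (complexity f (k * m)) / (k * m : ℕ) :=
          (subadditive_log_complexity hf).lim_le_div bddBelow_log_complexity_div (by positivity)
      _ ≤ (Real.log m + (k + 1) * ρ) / (k * m) := by
          push_cast
          gcongr
      _ = Real.log m / m * (k : ℝ)⁻¹ + (1 + (k : ℝ)⁻¹) * (ρ / m) := by
          field_simp
  have hinv : Tendsto (fun k : ℕ => (k : ℝ)⁻¹) atTop (𝓝 0) :=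
    tendsto_inv_atTop_zero.comp tendsto_natCast_atTop_atTop
  refine ge_of_tendsto ?_ (eventually_atTop.2 ⟨1, hbound⟩)
  simpa using (hinv.const_mul (Real.log m / m)).add ((hinv.const_add 1).mul_const (ρ / m))

lemma tendsto_log_card_regularBlocks_div (hf : (range f).Finite) :
    Tendsto (fun m => Real.log (Nat.card (regularBlocks f m)) / m) atTop
      (𝓝 (subadditive_log_complexity hf).lim) := by
  refine tendsto_of_tendsto_of_tendsto_of_le_of_le' tendsto_const_nhds
    (tendsto_log_complexity_div hf) ?_ (Eventually.of_forall fun m => ?_)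
  · filter_upwards [eventually_gt_atTop 0] with m hm
    exact lim_le_log_card_regularBlocks_div hf hm
  · gcongr ?_ / _
    exact log_natCast_le_log_natCast (card_regularBlocks_le_complexity hf m)

end Blocks

section Entropy

variable {Z : Type*} {T : Z → Z} {𝒰 𝒱 : Set (Set Z)} {a : ℕ → ℝ} {L : ℝ}

lemma coverNum_le_natCard {ι : Type*} [Finite ι] (G : ι → Set Z) (hG : ∀ i, G i ∈ 𝒱)
    (hcov : ∀ z, ∃ i, z ∈ G i) : coverNum 𝒱 ≤ Nat.card ι := by
  classical
  have := Fintype.ofFinite ι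
  refine le_trans (Nat.sInf_le ⟨Finset.univ.image G, ?_, ?_, rfl⟩) ?_
  · simpa [subset_def] using hG
  · exact eq_univ_of_forall fun z => (hcov z).elim fun i hi => ⟨G i, by simp, hi⟩
  · exact Finset.card_image_le.trans_eq (Nat.card_eq_fintype_card.symm)

lemma coverEntropy_le_of_tendsto (ha : Tendsto a atTop (𝓝 L))
    (h : ∀ n, Real.log (coverNum (iterJoin T 𝒰 n)) / n ≤ a n) :
    coverEntropy T 𝒰 ≤ L := by
  rw [← ((continuous_coe_real_ereal.tendsto L).comp ha).limsup_eq]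
  exact limsup_le_limsup (Eventually.of_forall fun n => EReal.coe_le_coe (h n))

lemma le_coverEntropy_of_tendsto (ha : Tendsto a atTop (𝓝 L))
    (h : ∀ n, a n ≤ Real.log (coverNum (iterJoin T 𝒰 n)) / n) :
    (L : EReal) ≤ coverEntropy T 𝒰 := by
  rw [← ((continuous_coe_real_ereal.tendsto L).comp ha).limsup_eq]
  exact limsup_le_limsup (Eventually.of_forall fun n => EReal.coe_le_coe (h n))

end Entropy

section OpenCovers

variable {Z : Type*} [TopologicalSpace Z] {𝒱 : Set (Set Z)}

lemma IsOpenCover.iterJoin {𝒰 : Set (Set Z)} (h𝒰 : IsOpenCover 𝒰) {T : Z → Z}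
    (hT : Continuous T) (n : ℕ) : IsOpenCover (iterJoin T 𝒰 n) := by
  refine ⟨?_, eq_univ_of_forall fun z => ?_⟩
  · rintro _ ⟨u, hu, rfl⟩
    exact isOpen_iInter_of_finite fun j => (h𝒰.1 _ (hu j)).preimage (hT.iterate _)
  · have hz (j : Fin n) : ∃ U ∈ 𝒰, T^[j] z ∈ U := mem_sUnion.1 (h𝒰.2 ▸ mem_univ _)
    choose u hu hzu using hz
    exact ⟨_, ⟨u, hu, rfl⟩, mem_iInter.2 hzu⟩

lemma natCard_range_le_coverNum [CompactSpace Z] (h𝒱 : IsOpenCover 𝒱) {α : Type*}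
    {p : Z → α} (hp : ∀ V ∈ 𝒱, ∀ z ∈ V, ∀ z' ∈ V, p z = p z') :
    Nat.card (range p) ≤ coverNum 𝒱 := by
  obtain ⟨𝒲, h𝒲𝒱, h𝒲, h𝒲cov⟩ := isCompact_univ.elim_finite_subcover_image
    (c := id) (fun V hV => h𝒱.1 V hV) (by simp [← sUnion_eq_biUnion, h𝒱.2])
  refine le_csInf ⟨_, h𝒲.toFinset, by simpa using h𝒲𝒱, ?_, rfl⟩ ?_
  · simpa [sUnion_eq_biUnion, ← univ_subset_iff] using h𝒲cov
  rintro _ ⟨F, hF𝒱, hFcov, rfl⟩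
  have hpick (y : range p) : ∃ V ∈ F, ∃ z ∈ V, p z = y := by
    obtain ⟨z, hz⟩ := y.2
    obtain ⟨V, hVF, hzV⟩ := mem_sUnion.1 (hFcov ▸ mem_univ z)
    exact ⟨V, hVF, z, hzV, hz⟩
  choose V hVF z hzV hz using hpick
  calc Nat.card (range p) ≤ Nat.card (F : Set (Set Z)) :=
        Nat.card_le_card_of_injective (fun y => ⟨V y, hVF y⟩) fun y y' h => Subtype.ext <| by
          have hV : V y' = V y := congrArg Subtype.val h.symm
          rw [← hz y, ← hz y']
          exact hp _ (hF𝒱 (hVF y)) _ (hzV y) _ (hV ▸ hzV y')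
    _ = F.card := by simp

end OpenCovers

lemma exists_cylinder_subset_of_isOpen {E : ℕ → Type*} [∀ n, TopologicalSpace (E n)]
    {U : Set (∀ n, E n)} (hU : IsOpen U) {x : ∀ n, E n} (hx : x ∈ U) :
    ∃ N, PiNat.cylinder x N ⊆ U := by
  obtain ⟨I, u, hu, hIu⟩ := isOpen_pi_iff.1 hU x hx
  refine ⟨I.sup id + 1, fun y hy => hIu fun i hi => ?_⟩
  rw [hy i (Nat.lt_succ_of_le (Finset.le_sup (f := id) hi))]
  exact (hu i hi).2

section Shift

variable {X : Type*} [TopologicalSpace X] {f : ℕ → X}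

lemma continuous_shiftOn (f : ℕ → X) : Continuous (shiftOn f) :=
  Continuous.subtype_mk (f := fun ω : orbitClosure f => fun k => ω.1 (k + 1))
    (continuous_pi fun k => (continuous_apply (k + 1)).comp continuous_subtype_val) _

lemma shiftOn_iterate_apply (j : ℕ) (ω : orbitClosure f) (k : ℕ) :
    ((shiftOn f)^[j] ω).1 k = ω.1 (k + j) := by
  induction j generalizing ω with
  | zero => rfl
  | succ j ih => rw [Function.iterate_succ_apply, ih]; rfl

def letterCover (f : ℕ → X) : Set (Set (orbitClosure f)) :=
  range fun a : X => {ω | ω.1 0 = a}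

lemma prefix_eq_of_mem_iterJoin_letterCover {n : ℕ} {V : Set (orbitClosure f)}
    (hV : V ∈ iterJoin (shiftOn f) (letterCover f) n) {ω ω' : orbitClosure f} (hω : ω ∈ V)
    (hω' : ω' ∈ V) : (fun j : Fin n => ω.1 j) = fun j : Fin n => ω'.1 j := by
  obtain ⟨u, hu, rfl⟩ := hV
  choose a ha using hu
  funext j
  have h := mem_iInter.1 hω j
  have h' := mem_iInter.1 hω' j
  rw [← ha j] at h h'
  simp only [mem_preimage, mem_ofPred_eq, shiftOn_iterate_apply, zero_add] at h h'
  rw [h, h']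

end Shift

section OrbitClosure

variable {X : Type*} [TopologicalSpace X] [T1Space X] {f : ℕ → X}

lemma orbitClosure_subset_pi (hf : (range f).Finite) :
    orbitClosure f ⊆ univ.pi fun _ => range f :=
  closure_minimal (fun _ ⟨n, hn⟩ k _ => ⟨n + k, (hn k).symm⟩)
    (isClosed_set_pi fun _ _ => hf.isClosed)

lemma compactSpace_orbitClosure (hf : (range f).Finite) : CompactSpace (orbitClosure f) :=
  isCompact_iff_compactSpace.1 <| (isCompact_univ_pi fun _ => hf.isCompact).of_isClosed_subset
    isClosed_closure (orbitClosure_subset_pi hf)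

lemma range_prefix_eq_blocks (hf : (range f).Finite) (m : ℕ) :
    range (fun (ω : orbitClosure f) (j : Fin m) => ω.1 j) = blocks f m := by
  refine Subset.antisymm ?_ fun w ⟨n, hn⟩ =>
    ⟨⟨_, subset_closure ⟨n, fun _ => rfl⟩⟩, funext fun j => (hn j).symm⟩
  rintro _ ⟨ω, rfl⟩
  have hmaps : MapsTo (fun (ω : ℕ → X) (j : Fin m) => ω j) (orbitSet f) (blocks f m) :=
    fun _ ⟨n, hn⟩ => ⟨n, fun j => hn j⟩
  have := map_mem_closure (continuous_pi fun j => continuous_apply _) ω.2 hmaps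
  rwa [(blocks_finite hf m).isClosed.closure_eq] at this

/-- On `X_f` the coordinates take values in the finite, hence discrete, set `range f`. -/
lemma isOpen_setOf_apply_eq (hf : (range f).Finite) (k : ℕ) (a : X) :
    IsOpen {ω : orbitClosure f | ω.1 k = a} := by
  have := hf.to_subtype
  let g : orbitClosure f → range f :=
    fun ω => ⟨ω.1 k, orbitClosure_subset_pi hf ω.2 k trivial⟩
  have hg : Continuous g := ((continuous_apply k).comp continuous_subtype_val).subtype_mk _
  exact (isOpen_discrete {x : range f | x.1 = a}).preimage hg

lemma isOpen_setOf_mem_cylinder (hf : (range f).Finite) (x : ℕ → X) (N : ℕ) :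
    IsOpen {ω : orbitClosure f | ω.1 ∈ PiNat.cylinder x N} := by
  have : {ω : orbitClosure f | ω.1 ∈ PiNat.cylinder x N}
      = ⋂ i ∈ Finset.range N, {ω | ω.1 i = x i} := by
    ext
    simp [PiNat.mem_cylinder_iff]
  rw [this]
  exact isOpen_biInter_finset fun i _ => isOpen_setOf_apply_eq hf i (x i)

lemma isOpenCover_letterCover (hf : (range f).Finite) : IsOpenCover (letterCover f) :=
  ⟨by rintro _ ⟨a, rfl⟩; exact isOpen_setOf_apply_eq hf 0 a,
    eq_univ_of_forall fun ω => ⟨_, ⟨ω.1 0, rfl⟩, rfl⟩⟩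

/-- A Lebesgue number for open covers of `X_f`, measured in cylinder depth. -/
lemma exists_cylinder_depth_subordinate (hf : (range f).Finite)
    {𝒰 : Set (Set (orbitClosure f))} (h𝒰 : IsOpenCover 𝒰) :
    ∃ N, ∀ ω : orbitClosure f, ∃ U ∈ 𝒰,
      ∀ ω' : orbitClosure f, ω'.1 ∈ PiNat.cylinder ω.1 N → ω' ∈ U := by
  have := compactSpace_orbitClosure hf
  have hloc (ω : orbitClosure f) : ∃ U ∈ 𝒰, ∃ N,
      ∀ ω' : orbitClosure f, ω'.1 ∈ PiNat.cylinder ω.1 N → ω' ∈ U := by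
    obtain ⟨U, hU𝒰, hωU⟩ := mem_sUnion.1 (h𝒰.2 ▸ mem_univ ω)
    obtain ⟨U', hU', rfl⟩ := isOpen_induced_iff.1 (h𝒰.1 U hU𝒰)
    obtain ⟨N, hN⟩ := exists_cylinder_subset_of_isOpen hU' hωU
    exact ⟨_, hU𝒰, N, fun ω' hω' => hN hω'⟩
  choose U hU𝒰 N hN using hloc
  obtain ⟨t, ht⟩ := isCompact_univ.elim_finite_subcover
    (fun ω => {ω' : orbitClosure f | ω'.1 ∈ PiNat.cylinder ω.1 (N ω)})
    (fun ω => isOpen_setOf_mem_cylinder hf _ _)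
    (fun ω _ => mem_iUnion.2 ⟨ω, PiNat.self_mem_cylinder _ _⟩)
  refine ⟨t.sup N, fun ω => ?_⟩
  obtain ⟨i, hit, hωi⟩ := mem_iUnion₂.1 (ht (mem_univ ω))
  refine ⟨U i, hU𝒰 i, fun ω' hω' => hN i ω' ?_⟩
  rw [← PiNat.mem_cylinder_iff_eq.1 hωi]
  exact PiNat.cylinder_anti _ (Finset.le_sup hit) hω'

lemma complexity_le_coverNum_letterCover (hf : (range f).Finite) (n : ℕ) :
    complexity f n ≤ coverNum (iterJoin (shiftOn f) (letterCover f) n) := by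
  have := compactSpace_orbitClosure hf
  rw [complexity, ← range_prefix_eq_blocks hf]
  exact natCard_range_le_coverNum ((isOpenCover_letterCover hf).iterJoin (continuous_shiftOn f) n)
    fun _ hV _ hω _ hω' => prefix_eq_of_mem_iterJoin_letterCover hV hω hω'

/-- Points of `X_f` with the same prefix of length `n + N` lie in a common member of the
`n`-fold join, built from the cylinders of depth `N` around their first `n` shifts. -/
lemma coverNum_iterJoin_le_complexity (hf : (range f).Finite) {𝒰 : Set (Set (orbitClosure f))}
    {N : ℕ} (hN : ∀ ω : orbitClosure f, ∃ U ∈ 𝒰,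
      ∀ ω' : orbitClosure f, ω'.1 ∈ PiNat.cylinder ω.1 N → ω' ∈ U) (n : ℕ) :
    coverNum (iterJoin (shiftOn f) 𝒰 n) ≤ complexity f (n + N) := by
  choose U hU𝒰 hU using hN
  have := (blocks_finite hf (n + N)).to_subtype
  rw [complexity]
  rw [← range_prefix_eq_blocks hf] at this ⊢
  choose rep hrep using fun w : range (fun (ω : orbitClosure f) (j : Fin (n + N)) => ω.1 j) => w.2
  refine coverNum_le_natCard
    (fun w => ⋂ j : Fin n, (shiftOn f)^[j] ⁻¹' U ((shiftOn f)^[j] (rep w)))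
    (fun w => ⟨_, fun j => hU𝒰 _, rfl⟩)
    fun ω => ⟨⟨_, ω, rfl⟩, mem_iInter.2 fun j => hU _ _ fun i hi => ?_⟩
  simp only [shiftOn_iterate_apply]
  exact (congrFun (hrep ⟨_, ω, rfl⟩) ⟨i + j, by omega⟩).symm

lemma AE_eq_lim (hf : (range f).Finite) : AE f = (subadditive_log_complexity hf).lim := by
  refine le_antisymm (iSup₂_le fun 𝒰 h𝒰 => ?_)
    (le_iSup₂_of_le (letterCover f) (isOpenCover_letterCover hf) ?_)
  · obtain ⟨N, hN⟩ := exists_cylinder_depth_subordinate hf h𝒰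
    have ha := (tendsto_log_complexity_div hf).add
      (tendsto_const_div_atTop_nhds_zero_nat (Real.log (complexity f N)))
    rw [add_zero] at ha
    refine coverEntropy_le_of_tendsto ha fun n => ?_
    calc Real.log (coverNum (iterJoin (shiftOn f) 𝒰 n)) / n
        ≤ Real.log (complexity f (n + N)) / n := by
          gcongr ?_ / _
          exact log_natCast_le_log_natCast (coverNum_iterJoin_le_complexity hf hN n)
      _ ≤ (Real.log (complexity f n) + Real.log (complexity f N)) / n := by
          gcongr
          exact subadditive_log_complexity hf n N
      _ = _ := add_div _ _ _
  · exact le_coverEntropy_of_tendsto (tendsto_log_complexity_div hf) fun n => by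
      gcongr ?_ / _
      exact log_natCast_le_log_natCast (complexity_le_coverNum_letterCover hf n)

end OrbitClosure

end Anqie

theorem anqie_entropy_eq_lim_log_regular_blocks_general {X : Type*} [TopologicalSpace X]
    [T2Space X] (f : ℕ → X) (hf : (Set.range f).Finite) :
    Filter.Tendsto
      (fun m : ℕ =>
        ((Real.log (Nat.card {w : Fin m → X // ∃ l : ℕ, ∀ j : Fin m, w j = f (l * m + j)}) / m : ℝ) :
          EReal))
      Filter.atTop (nhds (Anqie.AE f)) := by
  rw [Anqie.AE_eq_lim hf]
  exact (continuous_coe_real_ereal.tendsto _).comp (Anqie.tendsto_log_card_regularBlocks_div hf)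

/-- For a compact Hausdorff space `X` and a finite-range map
`f : ℕ → X`, the limit `lim_m (log |R_m(f)|)/m` exists and equals `AE(f)`, where
`R_m(f)` is the set of `m`-blocks of `f` starting at multiples of `m`. -/
theorem anqie_entropy_eq_lim_log_regular_blocks {X : Type*} [TopologicalSpace X]
    [CompactSpace X] [T2Space X] (f : ℕ → X) (hf : (Set.range f).Finite) :
    Filter.Tendsto
      (fun m : ℕ =>
        ((Real.log (Nat.card {w : Fin m → X // ∃ l : ℕ, ∀ j : Fin m, w j = f (l * m + j)}) / m : ℝ) :
          EReal))
      Filter.atTop (nhds (Anqie.AE f)) :=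
  anqie_entropy_eq_lim_log_regular_blocks_general f hf
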